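/- Define φ(x) = ∫₀ˣ exp(−t²/2) dt. For all x > 0, (exp(−x²/2)/φ(x)) · ( x² − 1 + x·exp(−x²/2)/φ(x) ) ≤ 2x/3. -/

import Mathlib

/-!
Writing `r = exp(-x²/2)/φ(x)`, the left-hand side is the convex quadratic `r (x² - 1 + x r)`,
which vanishes at `r = 0`; on `[0, R]` it therefore stays below the chord through
`(R, R (x² - 1 + x R))`. Comparing `φ(x)` with `(x + x³/3) exp(-x²/2)`, whose derivative
`(1 - x⁴/3) exp(-x²/2)` lies below the integrand, gives `r ≤ R := 3 / (x (x² + 3))`, and at this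
endpoint the quadratic equals `3x(x² + 2)/(x² + 3)² ≤ 2x/3`.
-/

open Real

lemma mul_add_mul_le_of_le_of_le {a c r R B : ℝ} (hc : 0 ≤ c) (hr : 0 ≤ r) (hrR : r ≤ R)
    (hB : 0 ≤ B) (hR : R * (a + c * R) ≤ B) : r * (a + c * r) ≤ B := by
  rcases hr.eq_or_lt with rfl | hr
  · simpa using hB
  have hRpos : 0 < R := hr.trans_le hrR
  have chord : r * (a + c * r) ≤ r / R * (R * (a + c * R)) := by
    have gap : r / R * (R * (a + c * R)) - r * (a + c * r) = c * r * (R - r) := by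
      field_simp; ring
    linarith [mul_nonneg (mul_nonneg hc hr.le) (sub_nonneg.2 hrR)]
  calc r * (a + c * r) ≤ r / R * (R * (a + c * R)) := chord
    _ ≤ r / R * B := by gcongr
    _ ≤ 1 * B := by gcongr; exact (div_le_one hRpos).2 hrR
    _ = B := one_mul B

lemma integral_exp_neg_sq_div_two_pos {x : ℝ} (hx : 0 < x) :
    0 < ∫ t in (0 : ℝ)..x, exp (-t ^ 2 / 2) :=
  intervalIntegral.intervalIntegral_pos_of_pos_on
    ((by fun_prop : Continuous fun t : ℝ => exp (-t ^ 2 / 2)).intervalIntegrable _ _)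
    (fun _ _ => exp_pos _) hx

lemma hasDerivAt_add_pow_three_div_three_mul_exp (y : ℝ) :
    HasDerivAt (fun y : ℝ => (y + y ^ 3 / 3) * exp (-y ^ 2 / 2))
      ((1 - y ^ 4 / 3) * exp (-y ^ 2 / 2)) y := by
  have hpoly : HasDerivAt (fun y : ℝ => y + y ^ 3 / 3) (1 + y ^ 2) y :=
    ((hasDerivAt_id y).add ((hasDerivAt_pow 3 y).div_const 3)).congr_deriv (by ring)
  have hexp : HasDerivAt (fun y : ℝ => exp (-y ^ 2 / 2)) (exp (-y ^ 2 / 2) * -y) y :=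
    ((hasDerivAt_pow 2 y).neg.div_const 2).exp.congr_deriv (by simp only [Pi.neg_apply]; ring)
  exact (hpoly.mul hexp).congr_deriv (by ring)

lemma add_pow_three_div_three_mul_exp_le_integral {x : ℝ} (hx : 0 ≤ x) :
    (x + x ^ 3 / 3) * exp (-x ^ 2 / 2) ≤ ∫ t in (0 : ℝ)..x, exp (-t ^ 2 / 2) := by
  let g : ℝ → ℝ := fun y =>
    (∫ t in (0 : ℝ)..y, exp (-t ^ 2 / 2)) - (y + y ^ 3 / 3) * exp (-y ^ 2 / 2)
  have hg : ∀ y, HasDerivAt g (y ^ 4 / 3 * exp (-y ^ 2 / 2)) y := fun y =>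
    (((by fun_prop : Continuous fun t : ℝ => exp (-t ^ 2 / 2)).integral_hasStrictDerivAt
      0 y).hasDerivAt.sub (hasDerivAt_add_pow_three_div_three_mul_exp y)).congr_deriv (by ring)
  have hmono : Monotone g := monotone_of_hasDerivAt_nonneg hg fun y => by positivity
  simpa [g, sub_nonneg] using hmono hx

lemma exp_div_integral_le {x : ℝ} (hx : 0 < x) :
    exp (-x ^ 2 / 2) / (∫ t in (0 : ℝ)..x, exp (-t ^ 2 / 2)) ≤ 3 / (x * (x ^ 2 + 3)) := by
  rw [div_le_div_iff₀ (integral_exp_neg_sq_div_two_pos hx) (by positivity)]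
  linarith [add_pow_three_div_three_mul_exp_le_integral hx.le]

lemma quadratic_at_three_div_le {x : ℝ} (hx : 0 < x) :
    3 / (x * (x ^ 2 + 3)) * (x ^ 2 - 1 + x * (3 / (x * (x ^ 2 + 3)))) ≤ 2 * x / 3 := by
  have hval : 3 / (x * (x ^ 2 + 3)) * (x ^ 2 - 1 + x * (3 / (x * (x ^ 2 + 3))))
      = 3 * x * (x ^ 2 + 2) / (x ^ 2 + 3) ^ 2 := by
    field_simp; ring
  rw [hval, div_le_div_iff₀ (by positivity) (by norm_num)]
  nlinarith [pow_pos hx 5, pow_pos hx 3]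

/-- For `φ(x) = ∫₀ˣ exp(−t²/2) dt` and all `x > 0`:
`(exp(−x²/2)/φ(x))·(x² − 1 + x·exp(−x²/2)/φ(x)) ≤ 2x/3`. -/
theorem central_analytic_ineq (x : ℝ) (hx : 0 < x) :
    Real.exp (-x ^ 2 / 2) / (∫ t in (0 : ℝ)..x, Real.exp (-t ^ 2 / 2)) *
        (x ^ 2 - 1 +
          x * Real.exp (-x ^ 2 / 2) / (∫ t in (0 : ℝ)..x, Real.exp (-t ^ 2 / 2))) ≤
      2 * x / 3 := by
  rw [mul_div_assoc]
  exact mul_add_mul_le_of_le_of_le hx.le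
    (div_pos (exp_pos _) (integral_exp_neg_sq_div_two_pos hx)).le (exp_div_integral_le hx)
    (by positivity) (quadratic_at_three_div_le hx)
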